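/- Let q be a negative integer and s a nonnegative integer. Then Res_x Σ_{i=0}^{s} C(q,i) (1+x)^{-q-1} / x^{-q+i} = 1, where Res_x extracts the coefficient of x^{-1} of a formal Laurent series and C(q,i) = q(q-1)···(q-i+1)/i! is the generalized binomial coefficient. Equivalently, Σ_{i=0}^{s} C(q,i)·C(-q-1, -q+i-1) = 1. -/

import Mathlib

/-! Since `(1+x)^{-q-1}` is a polynomial of degree `-q-1`, the `i`-th term
`C(-q-1, -q-1+i)` vanishes for `i ≥ 1`, and the `i = 0` term is `C(q,0)·C(-q-1,-q-1) = 1`. -/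

open Finset in
/-- The generalized binomial coefficient `C(α,i) = α(α-1)⋯(α-i+1)/i!`. -/
def genChoose (α : ℚ) (i : ℕ) : ℚ := (∏ j ∈ Finset.range i, (α - j)) / (Nat.factorial i)

open Finset

theorem genChoose_zero (α : ℚ) : genChoose α 0 = 1 := by
  simp [genChoose]

theorem sum_genChoose_mul_choose_add (α : ℚ) (n s : ℕ) :
    ∑ i ∈ range (s + 1), genChoose α i * (n.choose (n + i) : ℚ) = 1 := by
  rw [sum_range_succ']
  have hvanish : ∀ i, n.choose (n + (i + 1)) = 0 := fun i => Nat.choose_eq_zero_of_lt (by omega)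
  simp [hvanish, genChoose_zero]

theorem Int.toNat_neg_add_sub_one {q : ℤ} (hq : q < 0) (i : ℕ) :
    (-q + i - 1).toNat = (-q - 1).toNat + i := by
  omega

open Finset in
/-- For a negative integer `q` and `s ∈ ℕ`,
`Res_x Σ_{i=0}^{s} C(q,i) (1+x)^{-q-1}/x^{-q+i} = 1`, i.e.
`Σ_{i=0}^{s} C(q,i)·C(-q-1, -q+i-1) = 1`. -/
theorem stmt8 (q : ℤ) (hq : q < 0) (s : ℕ) :
    ∑ i ∈ range (s + 1),
      genChoose (q : ℚ) i * ((Nat.choose (-q - 1).toNat (-q + i - 1).toNat : ℕ) : ℚ) = 1 := by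
  simp only [Int.toNat_neg_add_sub_one hq]
  exact sum_genChoose_mul_choose_add q _ s
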